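/- Let p(x₁, x₂|θ) = 1 + 2θ cos(πx₁)cos(πx₂) + (θ²/2)(cos(2πx₁) + cos(2πx₂)) for θ ∈ [−1, 1]. Then ∫_{[0,1]²} (x₁ − 1/2)(x₂ − 1/2) p(x₁, x₂|θ) dx₁ dx₂ = 8θ/π⁴, and ∫_{[0,1]²} (x₁ − 1/2)² p(x₁, x₂|θ) dx₁ dx₂ = 1/12 + θ²/(4π²). Consequently the correlation coefficient of (X₁, X₂) drawn from p(·|θ) equals (96 θ/π⁴)/(1 + 3θ²/π²). -/

import Mathlib

open Real intervalIntegral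

/-!
Integrate out `x₂` first: `∫ p(x₁, x₂) dx₂ = 1 + (θ²/2) cos 2πx₁` is the marginal density of `X₁`,
and `∫ (x₂ - 1/2) p(x₁, x₂) dx₂ = -(4θ/π²) cos πx₁`. Both moments then reduce to the
one-dimensional integrals `∫₀¹ (x - 1/2)ᵏ cos(nπx) dx`, computed from explicit antiderivatives.
-/

lemma integral_centered : ∫ x in (0 : ℝ)..1, (x - 1 / 2) = 0 := by
  norm_num [integral_comp_sub_right (fun x => x)]

lemma integral_centered_sq : ∫ x in (0 : ℝ)..1, (x - 1 / 2) ^ 2 = 1 / 12 := by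
  norm_num [integral_comp_sub_right (fun x => x ^ 2)]

lemma integral_centered_mul_cos_nat_mul_pi {n : ℕ} (hn : n ≠ 0) :
    ∫ x in (0 : ℝ)..1, (x - 1 / 2) * cos (n * π * x) = ((-1) ^ n - 1) / (n * π) ^ 2 := by
  set ω : ℝ := n * π
  have hω : ω ≠ 0 := by positivity
  have hF : ∀ x, HasDerivAt (fun x => (x - 1 / 2) * sin (ω * x) / ω + cos (ω * x) / ω ^ 2)
      ((x - 1 / 2) * cos (ω * x)) x := by
    intro x
    have hωx : HasDerivAt (fun x => ω * x) ω x := by simpa using (hasDerivAt_id x).const_mul ω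
    refine (((((hasDerivAt_id x).sub_const (1 / 2)).mul hωx.sin).div_const ω).add
      (hωx.cos.div_const (ω ^ 2))).congr_deriv ?_
    simp only [id]
    field_simp
    ring
  rw [integral_eq_sub_of_hasDerivAt (fun x _ => hF x)
    ((by fun_prop : Continuous _).intervalIntegrable _ _)]
  simp [ω, sin_nat_mul_pi, cos_nat_mul_pi]
  field_simp

lemma integral_centered_sq_mul_cos_nat_mul_pi {n : ℕ} (hn : n ≠ 0) :
    ∫ x in (0 : ℝ)..1, (x - 1 / 2) ^ 2 * cos (n * π * x) = ((-1) ^ n + 1) / (n * π) ^ 2 := by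
  set ω : ℝ := n * π
  have hω : ω ≠ 0 := by positivity
  have hF : ∀ x, HasDerivAt (fun x => (x - 1 / 2) ^ 2 * sin (ω * x) / ω
      + 2 * (x - 1 / 2) * cos (ω * x) / ω ^ 2 - 2 * sin (ω * x) / ω ^ 3)
      ((x - 1 / 2) ^ 2 * cos (ω * x)) x := by
    intro x
    have hωx : HasDerivAt (fun x => ω * x) ω x := by simpa using (hasDerivAt_id x).const_mul ω
    have hc : HasDerivAt (fun x : ℝ => x - 1 / 2) 1 x := (hasDerivAt_id x).sub_const _
    refine (((((hc.pow 2).mul hωx.sin).div_const ω).add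
      (((hc.const_mul 2).mul hωx.cos).div_const (ω ^ 2))).sub
      ((hωx.sin.const_mul 2).div_const (ω ^ 3))).congr_deriv ?_
    simp only [Pi.pow_apply]
    field_simp
    ring
  rw [integral_eq_sub_of_hasDerivAt (fun x _ => hF x)
    ((by fun_prop : Continuous _).intervalIntegrable _ _)]
  simp [ω, sin_nat_mul_pi, cos_nat_mul_pi]
  field_simp
  ring

lemma integral_mul_add_mul_add_mul {f g h : ℝ → ℝ} (hf : Continuous f) (hg : Continuous g)
    (hh : Continuous h) (a b c u v : ℝ) :
    ∫ x in u..v, (a * f x + b * g x + c * h x)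
      = a * (∫ x in u..v, f x) + b * (∫ x in u..v, g x) + c * ∫ x in u..v, h x := by
  rw [integral_add ((by fun_prop : Continuous _).intervalIntegrable _ _)
      ((hh.const_mul c).intervalIntegrable _ _),
    integral_add ((hf.const_mul a).intervalIntegrable _ _) ((hg.const_mul b).intervalIntegrable _ _)]
  simp only [integral_const_mul]

/-- The density p(x₁,x₂|θ) of SGM with m = 2, U = {(1,1)}. -/
noncomputable def corDensity (θ x₁ x₂ : ℝ) : ℝ :=
  1 + 2 * θ * Real.cos (Real.pi * x₁) * Real.cos (Real.pi * x₂) +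
    (θ ^ 2 / 2) * (Real.cos (2 * Real.pi * x₁) + Real.cos (2 * Real.pi * x₂))

lemma integral_corDensity_right (θ x₁ : ℝ) :
    ∫ x₂ in (0 : ℝ)..1, corDensity θ x₁ x₂ = 1 + θ ^ 2 / 2 * cos (2 * π * x₁) := by
  have hp : ∀ x₂, corDensity θ x₁ x₂ = (1 + θ ^ 2 / 2 * cos (2 * π * x₁)) * 1
      + 2 * θ * cos (π * x₁) * cos (π * x₂) + θ ^ 2 / 2 * cos (2 * π * x₂) := fun x₂ => by
    unfold corDensity; ring
  simp_rw [hp]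
  rw [integral_mul_add_mul_add_mul (by fun_prop) (by fun_prop) (by fun_prop)]
  simp

lemma integral_centered_mul_corDensity_right (θ x₁ : ℝ) :
    ∫ x₂ in (0 : ℝ)..1, (x₂ - 1 / 2) * corDensity θ x₁ x₂ = -(4 * θ / π ^ 2) * cos (π * x₁) := by
  have h₁ := integral_centered_mul_cos_nat_mul_pi one_ne_zero
  have h₂ := integral_centered_mul_cos_nat_mul_pi two_ne_zero
  norm_num at h₁ h₂
  have hp : ∀ x₂, (x₂ - 1 / 2) * corDensity θ x₁ x₂
      = (1 + θ ^ 2 / 2 * cos (2 * π * x₁)) * (x₂ - 1 / 2)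
        + 2 * θ * cos (π * x₁) * ((x₂ - 1 / 2) * cos (π * x₂))
        + θ ^ 2 / 2 * ((x₂ - 1 / 2) * cos (2 * π * x₂)) := fun x₂ => by
    unfold corDensity; ring
  simp_rw [hp]
  rw [integral_mul_add_mul_add_mul (by fun_prop) (by fun_prop) (by fun_prop), integral_centered,
    h₁, h₂]
  ring

lemma covariance_corDensity (θ : ℝ) :
    ∫ x₁ in (0 : ℝ)..1, ∫ x₂ in (0 : ℝ)..1, (x₁ - 1 / 2) * (x₂ - 1 / 2) * corDensity θ x₁ x₂
      = 8 * θ / π ^ 4 := by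
  have h₁ := integral_centered_mul_cos_nat_mul_pi one_ne_zero
  norm_num at h₁
  simp only [mul_assoc, integral_const_mul, integral_centered_mul_corDensity_right,
    mul_left_comm _ (-(4 * θ / π ^ 2))]
  rw [h₁]
  field_simp
  ring

lemma variance_corDensity (θ : ℝ) :
    ∫ x₁ in (0 : ℝ)..1, ∫ x₂ in (0 : ℝ)..1, (x₁ - 1 / 2) ^ 2 * corDensity θ x₁ x₂
      = 1 / 12 + θ ^ 2 / (4 * π ^ 2) := by
  have h₂ := integral_centered_sq_mul_cos_nat_mul_pi two_ne_zero
  norm_num at h₂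
  simp only [integral_const_mul, integral_corDensity_right, mul_add, mul_one,
    mul_left_comm _ (θ ^ 2 / 2)]
  rw [integral_add ((by fun_prop : Continuous _).intervalIntegrable _ _)
    ((by fun_prop : Continuous _).intervalIntegrable _ _), integral_const_mul,
    integral_centered_sq, h₂]
  field_simp
  ring

theorem sgm_correlation_general (θ : ℝ) :
    (∫ x₁ in (0 : ℝ)..1, ∫ x₂ in (0 : ℝ)..1,
        (x₁ - 1 / 2) * (x₂ - 1 / 2) * corDensity θ x₁ x₂)
      = 8 * θ / Real.pi ^ 4 ∧
    (∫ x₁ in (0 : ℝ)..1, ∫ x₂ in (0 : ℝ)..1,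
        (x₁ - 1 / 2) ^ 2 * corDensity θ x₁ x₂)
      = 1 / 12 + θ ^ 2 / (4 * Real.pi ^ 2) ∧
    (∫ x₁ in (0 : ℝ)..1, ∫ x₂ in (0 : ℝ)..1,
          (x₁ - 1 / 2) * (x₂ - 1 / 2) * corDensity θ x₁ x₂) /
        Real.sqrt
          ((∫ x₁ in (0 : ℝ)..1, ∫ x₂ in (0 : ℝ)..1,
              (x₁ - 1 / 2) ^ 2 * corDensity θ x₁ x₂) *
            (∫ x₁ in (0 : ℝ)..1, ∫ x₂ in (0 : ℝ)..1,
              (x₁ - 1 / 2) ^ 2 * corDensity θ x₁ x₂))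
      = (96 * θ / Real.pi ^ 4) / (1 + 3 * θ ^ 2 / Real.pi ^ 2) := by
  refine ⟨covariance_corDensity θ, variance_corDensity θ, ?_⟩
  rw [covariance_corDensity, variance_corDensity, sqrt_mul_self (by positivity)]
  field_simp
  ring

/-- The covariance, variance and correlation coefficient of (X₁, X₂) drawn from the
SGM density with m = 2, U = {(1,1)} and parameter θ ∈ [−1,1]. -/
theorem sgm_correlation (θ : ℝ) (hθ : θ ∈ Set.Icc (-1 : ℝ) 1) :
    (∫ x₁ in (0 : ℝ)..1, ∫ x₂ in (0 : ℝ)..1,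
        (x₁ - 1 / 2) * (x₂ - 1 / 2) * corDensity θ x₁ x₂)
      = 8 * θ / Real.pi ^ 4 ∧
    (∫ x₁ in (0 : ℝ)..1, ∫ x₂ in (0 : ℝ)..1,
        (x₁ - 1 / 2) ^ 2 * corDensity θ x₁ x₂)
      = 1 / 12 + θ ^ 2 / (4 * Real.pi ^ 2) ∧
    (∫ x₁ in (0 : ℝ)..1, ∫ x₂ in (0 : ℝ)..1,
          (x₁ - 1 / 2) * (x₂ - 1 / 2) * corDensity θ x₁ x₂) /
        Real.sqrt
          ((∫ x₁ in (0 : ℝ)..1, ∫ x₂ in (0 : ℝ)..1,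
              (x₁ - 1 / 2) ^ 2 * corDensity θ x₁ x₂) *
            (∫ x₁ in (0 : ℝ)..1, ∫ x₂ in (0 : ℝ)..1,
              (x₁ - 1 / 2) ^ 2 * corDensity θ x₁ x₂))
      = (96 * θ / Real.pi ^ 4) / (1 + 3 * θ ^ 2 / Real.pi ^ 2) :=
  sgm_correlation_general θ
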